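/- If p(x) = sum over j from 0 to k+1 of a_j x^j is a polynomial of degree k+1 over ℚ satisfying p(x+1) = p(x) + x^k for all x, with k ≥ 1, then the coefficient a_k equals -1/2. -/

import Mathlib

/-!
Expanding `p (X + 1)` binomially, the coefficients of `X ^ k` and `X ^ (k - 1)` in
`p (X + 1) - p X = X ^ k` give `(k + 1) a_{k+1} = 1` and `k a_k + (k + 1).choose 2 * a_{k+1} = 0`,
hence `k (a_k + 1/2) = 0`.
-/

open Polynomial Finset

section

variable {R : Type*} [CommSemiring R]

theorem coeff_comp_X_add_one (p : R[X]) {d : ℕ} (hd : p.natDegree < d) (n : ℕ) :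
    (p.comp (X + 1)).coeff n = ∑ i ∈ range d, (i.choose n : R) * p.coeff i := by
  conv_lhs => rw [p.as_sum_range' d hd]
  simp [Polynomial.sum_comp, monomial_comp, coeff_X_add_one_pow, mul_comm]

theorem coeff_comp_X_add_one_of_natDegree_le {p : R[X]} {n : ℕ} (hp : p.natDegree ≤ n + 2) :
    (p.comp (X + 1)).coeff n =
      p.coeff n + (n + 1) * p.coeff (n + 1) + ((n + 2).choose 2 : R) * p.coeff (n + 2) := by
  have h_low : ∑ i ∈ range n, (i.choose n : R) * p.coeff i = 0 :=
    sum_eq_zero fun i hi => by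
      rw [Nat.choose_eq_zero_of_lt (mem_range.mp hi), Nat.cast_zero, zero_mul]
  rw [coeff_comp_X_add_one p (Nat.lt_succ_of_le hp), sum_range_succ, sum_range_succ,
    sum_range_succ, h_low, Nat.choose_self, Nat.choose_succ_self_right, Nat.choose_symm_add]
  push_cast
  ring

end

open Polynomial in
theorem stmt10 (k : ℕ) (hk : 1 ≤ k) (p : Polynomial ℚ)
    (hp : p.degree = (k + 1 : ℕ))
    (hfe : p.comp (X + 1) = p + X ^ k) :
    p.coeff k = -(1 / 2) := by
  obtain ⟨m, rfl⟩ : ∃ m, k = m + 1 := ⟨k - 1, by omega⟩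
  have hdeg : p.natDegree = m + 2 := natDegree_eq_of_degree_eq_some hp
  have h_top :=
    coeff_comp_X_add_one_of_natDegree_le (n := m + 1) (by omega : p.natDegree ≤ m + 1 + 2)
  have h_next :=
    coeff_comp_X_add_one_of_natDegree_le (n := m) (by omega : p.natDegree ≤ m + 2)
  rw [hfe, coeff_eq_zero_of_natDegree_lt (by omega : p.natDegree < m + 1 + 2)] at h_top
  rw [hfe, Nat.cast_choose_two] at h_next
  simp only [coeff_add, coeff_X_pow, if_pos, if_neg (by omega : m ≠ m + 1), add_assoc,
    Nat.reduceAdd] at h_top h_next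
  push_cast at h_top h_next
  have h_prod : ((m : ℚ) + 1) * (p.coeff (m + 1) + 1 / 2) = 0 := by
    linear_combination (m + 1) / 2 * h_top - h_next
  exact eq_neg_of_add_eq_zero_left ((mul_eq_zero.mp h_prod).resolve_left (by positivity))
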